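/- arXiv:2507.00663 — 4 statements merged into one kernel-verified Lean document; each statement's English description precedes it below -/
import Mathlib

section
/- Assume (H1)–(H4) and fix M₀>0. Then there exists a constant C>0 depending only on M₀ and H such that for all ε>0, t>0, all x,y∈ℝⁿ with |x−y| ≤ M₀t, and all c∈ℝ: c − Ct ≤ m^ε(t,x,y,c) ≤ c + Ct, where m^ε(t,x,y,c) := ε m(t/ε, x/ε, y/ε, c/ε) and m is the fundamental solution. -/
open MeasureTheory Set Filter

noncomputable section

/-- `ℝⁿ` as a Euclidean space. -/
abbrev En (n : ℕ) := EuclideanSpace ℝ (Fin n)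

/-- The integer vector `z ∈ ℤⁿ` viewed as a point of `ℝⁿ`. -/
def intVec {n : ℕ} (z : Fin n → ℤ) : En n := WithLp.toLp 2 (fun i => (z i : ℝ))

/-- The Lagrangian `L(y,r,v) = sup_p { v·p - H(y,r,p) }` (Legendre transform in `p`). -/
noncomputable def Lag {n : ℕ} (H : En n → ℝ → En n → ℝ) (y : En n) (r : ℝ) (v : En n) : ℝ :=
  ⨆ p : En n, ((inner ℝ v p : ℝ) - H y r p)

/-- `γ : [0,t] → ℝⁿ` is an absolutely continuous curve from `y` (at time `0`) to `x`
(at time `t`), with a.e. derivative `g`: `γ(s) = y + ∫₀ˢ g`. -/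
def IsACCurve {n : ℕ} (t : ℝ) (y x : En n) (γ g : ℝ → En n) : Prop :=
  IntervalIntegrable g MeasureTheory.volume 0 t ∧ γ 0 = y ∧ γ t = x ∧
    ∀ s ∈ Set.Icc (0:ℝ) t, γ s = y + ∫ τ in (0:ℝ)..s, g τ

/-- Assumptions (H1)–(H4) on the Hamiltonian, with (H2)-constant `K`. -/
structure HJHyp (n : ℕ) (H : En n → ℝ → En n → ℝ) (K : ℝ) : Prop where
  /-- (H1) continuity -/
  cont : Continuous fun q : En n × ℝ × En n => H q.1 q.2.1 q.2.2
  /-- (H1) `ℤ^{n+1}`-periodicity in `(y,r)` -/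
  per : ∀ (y : En n) (r : ℝ) (p : En n) (z : Fin n → ℤ) (k : ℤ),
    H (y + intVec z) (r + (k : ℝ)) p = H y r p
  /-- `K > 0` -/
  Kpos : 0 < K
  /-- (H2) Lipschitz continuity in `r`, uniformly in `(y,p)` -/
  lipR : ∀ (y p : En n) (r s : ℝ), |H y r p - H y s p| ≤ K * |r - s|
  /-- (H3) superlinearity in `p`, uniformly in `(y,r)` -/
  superlin : ∀ A : ℝ, ∃ R : ℝ, ∀ p : En n, R ≤ ‖p‖ → ∀ (y : En n) (r : ℝ), A * ‖p‖ ≤ H y r p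
  /-- (H4) convexity in `p` -/
  convexP : ∀ (y : En n) (r : ℝ), ConvexOn ℝ Set.univ fun p => H y r p

/-- `m` is the fundamental solution associated with `u_t + H(x,u,Du) = 0`:
for every `(y,c)`, `(t,x) ↦ m t x y c` is continuous on `(0,∞) × ℝⁿ` and satisfies the
implicit variational formula. -/
def IsFundSol {n : ℕ} (H : En n → ℝ → En n → ℝ) (m : ℝ → En n → En n → ℝ → ℝ) : Prop :=
  ∀ (y : En n) (c : ℝ),
    ContinuousOn (fun q : ℝ × En n => m q.1 q.2 y c)
      (Set.Ioi (0:ℝ) ×ˢ (Set.univ : Set (En n))) ∧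
    ∀ t : ℝ, 0 < t → ∀ x : En n,
      m t x y c = c + sInf { v : ℝ | ∃ γ g : ℝ → En n, IsACCurve t y x γ g ∧
        v = ∫ s in (0:ℝ)..t, Lag H (γ s) (m s (γ s) y c) (g s) }


/-- Periodic reduction of the base point `(y,r)` to a fundamental domain. -/
lemma HJ_reduce {n : ℕ} {H : En n → ℝ → En n → ℝ}
    (hper : ∀ (y : En n) (r : ℝ) (p : En n) (z : Fin n → ℤ) (k : ℤ),
      H (y + intVec z) (r + (k : ℝ)) p = H y r p)
    (y : En n) (r : ℝ) :
    ∃ y' : En n, ∃ r' : ℝ, ‖y'‖ ≤ Real.sqrt n ∧ r' ∈ Set.Icc (0:ℝ) 1 ∧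
      ∀ p, H y r p = H y' r' p := by
  refine ⟨y + intVec (fun i => -⌊y i⌋), r + ((-⌊r⌋ : ℤ) : ℝ), ?_, ?_, ?_⟩
  · have hcoord : ∀ i, (y + intVec (fun i => -⌊y i⌋)) i = Int.fract (y i) := by
      intro i
      show y i + ((-⌊y i⌋ : ℤ) : ℝ) = Int.fract (y i)
      push_cast [Int.fract]
      ring
    rw [EuclideanSpace.norm_eq]
    apply Real.sqrt_le_sqrt
    calc ∑ i, ‖(y + intVec (fun i => -⌊y i⌋)) i‖ ^ 2
        ≤ ∑ _i : Fin n, (1:ℝ) := by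
          apply Finset.sum_le_sum
          intro i _
          rw [hcoord i]
          have h1 := Int.fract_nonneg (y i)
          have h2 := Int.fract_lt_one (y i)
          have : ‖Int.fract (y i)‖ ≤ 1 := by
            rw [Real.norm_eq_abs, abs_of_nonneg h1]; linarith
          calc ‖Int.fract (y i)‖ ^ 2 ≤ 1 ^ 2 := by
                exact pow_le_pow_left₀ (norm_nonneg _) this 2
            _ = 1 := one_pow 2
      _ = (n : ℝ) := by simp
  · push_cast
    have h1 := Int.fract_nonneg r
    have h2 := Int.fract_lt_one r
    unfold Int.fract at h1 h2
    constructor <;> [linarith; linarith]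
  · intro p
    exact (hper y r p _ _).symm

/-- `|H|` is bounded on `‖p‖ ≤ R`, uniformly in `(y,r)`. -/
lemma HJ_Hbound {n : ℕ} {H : En n → ℝ → En n → ℝ}
    (hcont : Continuous fun q : En n × ℝ × En n => H q.1 q.2.1 q.2.2)
    (hper : ∀ (y : En n) (r : ℝ) (p : En n) (z : Fin n → ℤ) (k : ℤ),
      H (y + intVec z) (r + (k : ℝ)) p = H y r p)
    (R : ℝ) (hR : 0 ≤ R) :
    ∃ C : ℝ, 0 ≤ C ∧ ∀ (y : En n) (r : ℝ) (p : En n), ‖p‖ ≤ R → |H y r p| ≤ C := by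
  have hK : IsCompact ((Metric.closedBall (0 : En n) (Real.sqrt n)) ×ˢ
      ((Set.Icc (0:ℝ) 1) ×ˢ (Metric.closedBall (0 : En n) R))) :=
    (isCompact_closedBall _ _).prod ((isCompact_Icc).prod (isCompact_closedBall _ _))
  obtain ⟨C, hC⟩ := hK.exists_bound_of_continuousOn hcont.continuousOn
  refine ⟨max C 0, le_max_right _ _, ?_⟩
  intro y r p hp
  obtain ⟨y', r', hy', hr', heq⟩ := HJ_reduce hper y r
  rw [heq p]
  have : ‖H y' r' p‖ ≤ C := hC (y', r', p) (by
    refine ⟨?_, hr', ?_⟩ <;> simpa using ‹_›)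
  calc |H y' r' p| ≤ C := this
    _ ≤ max C 0 := le_max_left _ _

/-- For fixed `(y,r,v)`, the family defining `Lag` is bounded above. -/
lemma HJ_lag_bddAbove {n : ℕ} {H : En n → ℝ → En n → ℝ}
    (hcont : Continuous fun q : En n × ℝ × En n => H q.1 q.2.1 q.2.2)
    (hsuper : ∀ A : ℝ, ∃ R : ℝ, ∀ p : En n, R ≤ ‖p‖ → ∀ (y : En n) (r : ℝ), A * ‖p‖ ≤ H y r p)
    (y : En n) (r : ℝ) (v : En n) :
    BddAbove (Set.range fun p : En n => (inner ℝ v p : ℝ) - H y r p) := by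
  obtain ⟨R, hR⟩ := hsuper ‖v‖
  have hφ : Continuous fun p : En n => (inner ℝ v p : ℝ) - H y r p := by
    exact (continuous_const.inner continuous_id).sub
      (hcont.comp (by continuity : Continuous fun p : En n => ((y, r, p) : En n × ℝ × En n)))
  obtain ⟨C, hC⟩ := (isCompact_closedBall (0 : En n) (max R 0)).exists_bound_of_continuousOn
    hφ.continuousOn
  refine ⟨max C 0, ?_⟩
  rintro _ ⟨p, rfl⟩
  by_cases hp : ‖p‖ ≤ max R 0
  · have := hC p (by simpa using hp)
    calc (inner ℝ v p : ℝ) - H y r p ≤ |(inner ℝ v p : ℝ) - H y r p| := le_abs_self _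
      _ ≤ C := this
      _ ≤ max C 0 := le_max_left _ _
  · push_neg at hp
    have h1 : ‖v‖ * ‖p‖ ≤ H y r p := hR p (le_of_lt (lt_of_le_of_lt (le_max_left _ _) hp)) y r
    have h2 : (inner ℝ v p : ℝ) ≤ ‖v‖ * ‖p‖ := real_inner_le_norm v p
    have : (inner ℝ v p : ℝ) - H y r p ≤ 0 := by linarith
    exact this.trans (le_max_right _ _)

/-- Uniform two-sided bounds on the Lagrangian. -/
lemma HJ_lag_bounds {n : ℕ} {H : En n → ℝ → En n → ℝ}
    (hcont : Continuous fun q : En n × ℝ × En n => H q.1 q.2.1 q.2.2)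
    (hper : ∀ (y : En n) (r : ℝ) (p : En n) (z : Fin n → ℤ) (k : ℤ),
      H (y + intVec z) (r + (k : ℝ)) p = H y r p)
    (hsuper : ∀ A : ℝ, ∃ R : ℝ, ∀ p : En n, R ≤ ‖p‖ → ∀ (y : En n) (r : ℝ), A * ‖p‖ ≤ H y r p)
    (M₀ : ℝ) (hM₀ : 0 < M₀) :
    ∃ C : ℝ, 0 < C ∧ ∀ (y : En n) (r : ℝ) (v : En n),
      (-C ≤ Lag H y r v) ∧ (‖v‖ ≤ M₀ → Lag H y r v ≤ C) := by
  obtain ⟨R₀, hR₀⟩ := hsuper M₀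
  set R := max R₀ 0 with hRdef
  have hRnn : (0:ℝ) ≤ R := le_max_right _ _
  obtain ⟨C₁, hC₁nn, hC₁⟩ := HJ_Hbound hcont hper R hRnn
  set C := M₀ * R + C₁ + 1 with hCdef
  have hCpos : 0 < C := by positivity
  refine ⟨C, hCpos, ?_⟩
  intro y r v
  constructor
  · have hmem : (inner ℝ v (0:En n) : ℝ) - H y r 0 ≤ Lag H y r v :=
      le_ciSup (HJ_lag_bddAbove hcont hsuper y r v) 0
    have h0 : |H y r 0| ≤ C₁ := hC₁ y r 0 (by simpa using hRnn)
    have h1 : -C₁ ≤ (inner ℝ v (0:En n) : ℝ) - H y r 0 := by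
      simp only [inner_zero_right, zero_sub]
      have := abs_le.mp h0
      linarith [this.2]
    have hC₁C : -C ≤ -C₁ := by
      have : 0 ≤ M₀ * R := by positivity
      simp only [neg_le_neg_iff, hCdef]; linarith
    linarith [hmem]
  · intro hv
    apply ciSup_le
    intro p
    by_cases hp : ‖p‖ ≤ R
    · have hip : (inner ℝ v p : ℝ) ≤ M₀ * R := by
        calc (inner ℝ v p : ℝ) ≤ ‖v‖ * ‖p‖ := real_inner_le_norm v p
          _ ≤ M₀ * R := mul_le_mul hv hp (norm_nonneg _) (le_of_lt hM₀)
      have hHlb : -C₁ ≤ H y r p := by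
        have := abs_le.mp (hC₁ y r p hp)
        linarith [this.1]
      simp only [hCdef]; linarith
    · push_neg at hp
      have h1 : M₀ * ‖p‖ ≤ H y r p := hR₀ p (le_of_lt (lt_of_le_of_lt (le_max_left _ _) hp)) y r
      have h2 : (inner ℝ v p : ℝ) ≤ M₀ * ‖p‖ := by
        calc (inner ℝ v p : ℝ) ≤ ‖v‖ * ‖p‖ := real_inner_le_norm v p
          _ ≤ M₀ * ‖p‖ := mul_le_mul_of_nonneg_right hv (norm_nonneg _)
      linarith

/-- Unscaled version of the linear bounds. -/
lemma HJ_m_bounds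
    {n : ℕ} (H : En n → ℝ → En n → ℝ) (K : ℝ) (hH : HJHyp n H K)
    (m : ℝ → En n → En n → ℝ → ℝ) (hm : IsFundSol H m)
    (M₀ : ℝ) (hM₀ : 0 < M₀) :
    ∃ C : ℝ, 0 < C ∧ ∀ t : ℝ, 0 < t → ∀ x y : En n, ‖x - y‖ ≤ M₀ * t →
      ∀ c : ℝ, c - C * t ≤ m t x y c ∧ m t x y c ≤ c + C * t := by
  obtain ⟨C, hCpos, hlag⟩ := HJ_lag_bounds hH.cont hH.per hH.superlin M₀ hM₀
  refine ⟨C, hCpos, ?_⟩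
  intro t ht x y hxy c
  have hform := (hm y c).2 t ht x
  set S : Set ℝ := { v : ℝ | ∃ γ g : ℝ → En n, IsACCurve t y x γ g ∧
      v = ∫ s in (0:ℝ)..t, Lag H (γ s) (m s (γ s) y c) (g s) } with hSdef
  -- every element of S is at least -(C*t)
  have hlow : ∀ w ∈ S, -(C * t) ≤ w := by
    rintro w ⟨γ, g, hAC, rfl⟩
    by_cases hInt : IntervalIntegrable
        (fun s => Lag H (γ s) (m s (γ s) y c) (g s)) volume 0 t
    · have hmono : ∫ s in (0:ℝ)..t, (-C) ≤
          ∫ s in (0:ℝ)..t, Lag H (γ s) (m s (γ s) y c) (g s) :=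
        intervalIntegral.integral_mono_on ht.le intervalIntegrable_const hInt
          (fun s _ => (hlag (γ s) (m s (γ s) y c) (g s)).1)
      rw [intervalIntegral.integral_const] at hmono
      have : (t - 0) • (-C) = -(C * t) := by
        simp [smul_eq_mul]; ring
      linarith [hmono, this.symm ▸ hmono]
    · rw [intervalIntegral.integral_undef hInt]
      nlinarith
  have hBdd : BddBelow S := ⟨-(C * t), hlow⟩
  -- the straight-line competitor
  set g0 : ℝ → En n := fun _ => t⁻¹ • (x - y) with hg0
  set γ0 : ℝ → En n := fun s => y + s • (t⁻¹ • (x - y)) with hγ0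
  have hAC : IsACCurve t y x γ0 g0 := by
    refine ⟨intervalIntegrable_const, by simp [hγ0], ?_, ?_⟩
    · show y + t • (t⁻¹ • (x - y)) = x
      rw [smul_smul, mul_inv_cancel₀ ht.ne', one_smul]
      abel
    · intro s _
      show y + s • (t⁻¹ • (x - y)) = y + ∫ τ in (0:ℝ)..s, t⁻¹ • (x - y)
      rw [intervalIntegral.integral_const, sub_zero]
  set v0 : ℝ := ∫ s in (0:ℝ)..t, Lag H (γ0 s) (m s (γ0 s) y c) (g0 s) with hv0def
  have hv0S : v0 ∈ S := ⟨γ0, g0, hAC, rfl⟩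
  have hg0norm : ∀ s : ℝ, ‖g0 s‖ ≤ M₀ := by
    intro s
    show ‖t⁻¹ • (x - y)‖ ≤ M₀
    rw [norm_smul, norm_inv, Real.norm_eq_abs, abs_of_pos ht]
    rw [inv_mul_le_iff₀ ht]
    linarith [hxy]
  have hv0le : v0 ≤ C * t := by
    by_cases hInt : IntervalIntegrable
        (fun s => Lag H (γ0 s) (m s (γ0 s) y c) (g0 s)) volume 0 t
    · have hmono : v0 ≤ ∫ s in (0:ℝ)..t, C :=
        intervalIntegral.integral_mono_on ht.le hInt intervalIntegrable_const
          (fun s _ => (hlag (γ0 s) (m s (γ0 s) y c) (g0 s)).2 (hg0norm s))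
      rw [intervalIntegral.integral_const] at hmono
      calc v0 ≤ (t - 0) • C := hmono
        _ = C * t := by simp [smul_eq_mul]; ring
    · rw [hv0def, intervalIntegral.integral_undef hInt]
      positivity
  have hinf_le : sInf S ≤ C * t := (csInf_le hBdd hv0S).trans hv0le
  have hle_inf : -(C * t) ≤ sInf S := le_csInf ⟨v0, hv0S⟩ hlow
  rw [hform]
  constructor <;> [linarith; linarith]

/-- Lemma 3.3: two-sided linear-in-time bounds for `m^ε(t,x,y,c) = ε m(t/ε,x/ε,y/ε,c/ε)`. -/
theorem mEps_linear_bounds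
    {n : ℕ} (H : En n → ℝ → En n → ℝ) (K : ℝ) (hH : HJHyp n H K)
    (m : ℝ → En n → En n → ℝ → ℝ) (hm : IsFundSol H m)
    (M₀ : ℝ) (hM₀ : 0 < M₀) :
    ∃ C : ℝ, 0 < C ∧ ∀ ε t : ℝ, 0 < ε → 0 < t → ∀ x y : En n, ‖x - y‖ ≤ M₀ * t →
      ∀ c : ℝ,
        c - C * t ≤ ε * m (t / ε) (ε⁻¹ • x) (ε⁻¹ • y) (c / ε) ∧
        ε * m (t / ε) (ε⁻¹ • x) (ε⁻¹ • y) (c / ε) ≤ c + C * t := by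
  obtain ⟨C, hCpos, hbd⟩ := HJ_m_bounds H K hH m hm M₀ hM₀
  refine ⟨C, hCpos, ?_⟩
  intro ε t hε ht x y hxy c
  have ht' : 0 < t / ε := div_pos ht hε
  have hxy' : ‖ε⁻¹ • x - ε⁻¹ • y‖ ≤ M₀ * (t / ε) := by
    rw [← smul_sub, norm_smul, norm_inv, Real.norm_eq_abs, abs_of_pos hε]
    rw [inv_mul_le_iff₀ hε]
    have heq : ε * (M₀ * (t / ε)) = M₀ * t := by field_simp
    rw [heq]
    exact hxy
  obtain ⟨h1, h2⟩ := hbd (t / ε) ht' (ε⁻¹ • x) (ε⁻¹ • y) hxy' (c / ε)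
  constructor
  · have := mul_le_mul_of_nonneg_left h1 hε.le
    calc c - C * t = ε * (c / ε - C * (t / ε)) := by field_simp
      _ ≤ ε * m (t / ε) (ε⁻¹ • x) (ε⁻¹ • y) (c / ε) := this
  · have := mul_le_mul_of_nonneg_left h2 hε.le
    calc ε * m (t / ε) (ε⁻¹ • x) (ε⁻¹ • y) (c / ε)
        ≤ ε * (c / ε + C * (t / ε)) := this
      _ = c + C * t := by field_simp
end
end

section
/- Let H₀:ℝⁿ→ℝ be convex and superlinear, and suppose there exist β₀>0 and q₂ ≥ q₁ > 1 such that H₀(p) ≤ β₀(|p|^{q₂}+1) for all p∈ℝⁿ, and every v in the subdifferential ∂H₀(p) satisfies |v| ≥ β₀⁻¹|p|^{q₁−1} − β₀. Set L₀(v) := sup_{p∈ℝⁿ}{v·p − H₀(p)}, m₁ := q₂/(q₂−1) and m₂ := q₁/(q₁−1). Then there exists β₁>0 such that: H₀(p) ≥ β₁⁻¹|p|^{q₁} − β₁ for all p; L₀(v) ≥ β₁⁻¹|v|^{m₁} − β₁ for all v; and |L₀(v₁) − L₀(v₂)| ≤ β₁(|v₁|^{m₂−1} + |v₂|^{m₂−1}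 + 1)|v₁−v₂| for all v₁,v₂∈ℝⁿ. -/
open Set

noncomputable section

private lemma rpow_add_le_aux (a b t : ℝ) (ha : 0 ≤ a) (hb : 0 ≤ b) (ht : 0 ≤ t) :
    (a + b) ^ t ≤ 2 ^ t * (a ^ t + b ^ t) := by
  rcases le_total a b with h | h
  · calc (a + b) ^ t ≤ (2 * b) ^ t :=
        Real.rpow_le_rpow (by linarith) (by linarith) ht
      _ = 2 ^ t * b ^ t := Real.mul_rpow (by norm_num) hb
      _ ≤ 2 ^ t * (a ^ t + b ^ t) := by
        have h1 : (0:ℝ) ≤ a ^ t := Real.rpow_nonneg ha t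
        have h2 : (0:ℝ) ≤ (2:ℝ) ^ t := Real.rpow_nonneg (by norm_num) t
        nlinarith
  · calc (a + b) ^ t ≤ (2 * a) ^ t :=
        Real.rpow_le_rpow (by linarith) (by linarith) ht
      _ = 2 ^ t * a ^ t := Real.mul_rpow (by norm_num) ha
      _ ≤ 2 ^ t * (a ^ t + b ^ t) := by
        have h1 : (0:ℝ) ≤ b ^ t := Real.rpow_nonneg hb t
        have h2 : (0:ℝ) ≤ (2:ℝ) ^ t := Real.rpow_nonneg (by norm_num) t
        nlinarith

private lemma rpow_young_aux (x δ s : ℝ) (hx : 0 ≤ x) (hδ : 0 < δ) (hs : 0 < s) :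
    x ^ s ≤ δ * x ^ (s + 1) + δ⁻¹ ^ s := by
  rcases le_total x δ⁻¹ with h | h
  · have h1 : x ^ s ≤ δ⁻¹ ^ s := Real.rpow_le_rpow hx h hs.le
    have h2 : (0:ℝ) ≤ δ * x ^ (s + 1) :=
      mul_nonneg hδ.le (Real.rpow_nonneg hx _)
    linarith
  · have hx0 : 0 < x := lt_of_lt_of_le (inv_pos.2 hδ) h
    have h1 : x ^ (s + 1) = x ^ s * x := by
      rw [Real.rpow_add hx0, Real.rpow_one]
    have h2 : (0:ℝ) ≤ x ^ s := Real.rpow_nonneg hx _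
    have h3 : x ^ s * δ⁻¹ ≤ x ^ s * x := mul_le_mul_of_nonneg_left h h2
    have h4 : δ * (x ^ s * δ⁻¹) = x ^ s := by field_simp
    have h5 : (0:ℝ) ≤ δ⁻¹ ^ s := Real.rpow_nonneg (inv_pos.2 hδ).le _
    nlinarith [mul_le_mul_of_nonneg_left h3 hδ.le]

set_option maxHeartbeats 1000000 in
/-- Growth properties (L5) of the Legendre transform `L₀` of a convex superlinear
Hamiltonian `H₀` with power-type growth bounds. -/
theorem legendre_growth
    {n : ℕ} (H₀ : En n → ℝ) (β₀ q₁ q₂ : ℝ) (hβ₀ : 0 < β₀) (hq₁ : 1 < q₁) (hq : q₁ ≤ q₂)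
    (hconv : ConvexOn ℝ Set.univ H₀)
    (hsuper : ∀ A : ℝ, ∃ R : ℝ, ∀ p : En n, R ≤ ‖p‖ → A * ‖p‖ ≤ H₀ p)
    (hupper : ∀ p : En n, H₀ p ≤ β₀ * (‖p‖ ^ q₂ + 1))
    (hsubdiff : ∀ p v : En n, (∀ q : En n, H₀ p + (inner ℝ v (q - p) : ℝ) ≤ H₀ q) →
      β₀⁻¹ * ‖p‖ ^ (q₁ - 1) - β₀ ≤ ‖v‖)
    (L₀ : En n → ℝ) (hL₀ : L₀ = fun v => ⨆ p : En n, ((inner ℝ v p : ℝ) - H₀ p))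
    (m₁ m₂ : ℝ) (hm₁ : m₁ = q₂ / (q₂ - 1)) (hm₂ : m₂ = q₁ / (q₁ - 1)) :
    ∃ β₁ : ℝ, 0 < β₁ ∧
      (∀ p : En n, β₁⁻¹ * ‖p‖ ^ q₁ - β₁ ≤ H₀ p) ∧
      (∀ v : En n, β₁⁻¹ * ‖v‖ ^ m₁ - β₁ ≤ L₀ v) ∧
      (∀ v₁ v₂ : En n, |L₀ v₁ - L₀ v₂| ≤
        β₁ * (‖v₁‖ ^ (m₂ - 1) + ‖v₂‖ ^ (m₂ - 1) + 1) * ‖v₁ - v₂‖) := by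
  have hq₂ : 1 < q₂ := hq₁.trans_le hq
  have hq₁' : 0 < q₁ - 1 := by linarith
  have hq₂' : 0 < q₂ - 1 := by linarith
  set θ : ℝ := (q₁ - 1)⁻¹ with hθdef
  have hθ : 0 < θ := inv_pos.2 hq₁'
  have hθm : m₂ - 1 = θ := by
    rw [hm₂, hθdef]
    field_simp
    ring
  -- existence of maximizers
  have hmax : ∀ v : En n, ∃ p : En n,
      ∀ q : En n, (inner ℝ v q : ℝ) - H₀ q ≤ (inner ℝ v p : ℝ) - H₀ p := by
    intro v
    obtain ⟨R, hR⟩ := hsuper (‖v‖ + 1)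
    set R' : ℝ := max R (max (H₀ 0) 0) with hR'
    have hR'0 : (0:ℝ) ≤ R' := le_max_of_le_right (le_max_right _ _)
    have hcont : Continuous H₀ := by
      rw [← continuousOn_univ]
      exact hconv.continuousOn isOpen_univ
    have hf : Continuous fun q : En n => (inner ℝ v q : ℝ) - H₀ q :=
      (continuous_const.inner continuous_id).sub hcont
    have hK : IsCompact (Metric.closedBall (0 : En n) R') := isCompact_closedBall _ _
    have hne : (Metric.closedBall (0 : En n) R').Nonempty :=
      ⟨0, by simpa [Metric.mem_closedBall] using hR'0⟩
    obtain ⟨p, hpK, hp⟩ := hK.exists_isMaxOn hne hf.continuousOn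
    refine ⟨p, fun q => ?_⟩
    by_cases hqmem : q ∈ Metric.closedBall (0 : En n) R'
    · exact hp hqmem
    · have hq1 : R' < ‖q‖ := by
        simpa [Metric.mem_closedBall, dist_zero_right] using hqmem
      have h2 : (‖v‖ + 1) * ‖q‖ ≤ H₀ q := hR q (le_trans (le_max_left _ _) hq1.le)
      have h3 : (inner ℝ v q : ℝ) ≤ ‖v‖ * ‖q‖ := real_inner_le_norm v q
      have h4 : (inner ℝ v q : ℝ) - H₀ q ≤ -‖q‖ := by nlinarith
      have h5 : -‖q‖ ≤ (inner ℝ v (0:En n) : ℝ) - H₀ 0 := by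
        simp only [inner_zero_right]
        have : H₀ 0 ≤ R' := le_max_of_le_right (le_max_left _ _)
        linarith [hq1]
      have h6 := hp (Metric.mem_closedBall_self hR'0)
      calc (inner ℝ v q : ℝ) - H₀ q ≤ -‖q‖ := h4
        _ ≤ (inner ℝ v (0:En n) : ℝ) - H₀ 0 := h5
        _ ≤ _ := h6
  -- maximizers compute L₀ and satisfy the norm bound
  have hLmax : ∀ v : En n, ∃ p : En n,
      L₀ v = (inner ℝ v p : ℝ) - H₀ p ∧
      (∀ q : En n, (inner ℝ v q : ℝ) - H₀ q ≤ (inner ℝ v p : ℝ) - H₀ p) ∧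
      ‖p‖ ≤ (β₀ * (‖v‖ + β₀)) ^ θ := by
    intro v
    obtain ⟨p, hp⟩ := hmax v
    have hbdd : BddAbove (Set.range fun q : En n => (inner ℝ v q : ℝ) - H₀ q) := by
      refine ⟨(inner ℝ v p : ℝ) - H₀ p, ?_⟩
      rintro x ⟨q, rfl⟩
      exact hp q
    have heq : L₀ v = (inner ℝ v p : ℝ) - H₀ p := by
      rw [hL₀]
      exact le_antisymm (ciSup_le hp) (le_ciSup hbdd p)
    have hsg : ∀ q : En n, H₀ p + (inner ℝ v (q - p) : ℝ) ≤ H₀ q := by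
      intro q
      rw [inner_sub_right]
      linarith [hp q]
    have hb := hsubdiff p v hsg
    have hnb : ‖p‖ ^ (q₁ - 1) ≤ β₀ * (‖v‖ + β₀) := by
      have h1 : β₀⁻¹ * ‖p‖ ^ (q₁ - 1) ≤ ‖v‖ + β₀ := by linarith
      calc ‖p‖ ^ (q₁ - 1) = β₀ * (β₀⁻¹ * ‖p‖ ^ (q₁ - 1)) := by field_simp
        _ ≤ β₀ * (‖v‖ + β₀) := mul_le_mul_of_nonneg_left h1 hβ₀.le
    refine ⟨p, heq, hp, ?_⟩
    have e1 : (q₁ - 1) * θ = 1 := mul_inv_cancel₀ hq₁'.ne'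
    calc ‖p‖ = (‖p‖ ^ (q₁ - 1)) ^ θ := by
          rw [← Real.rpow_mul (norm_nonneg p), e1, Real.rpow_one]
      _ ≤ (β₀ * (‖v‖ + β₀)) ^ θ :=
          Real.rpow_le_rpow (Real.rpow_nonneg (norm_nonneg p) _) hnb hθ.le
  -- constants
  set B₁ : ℝ := 2 ^ θ * β₀ ^ θ with hB₁def
  set B₂ : ℝ := 2 ^ θ * (β₀ * β₀) ^ θ with hB₂def
  have hB₁ : 0 < B₁ :=
    mul_pos (Real.rpow_pos_of_pos (by norm_num) _) (Real.rpow_pos_of_pos hβ₀ _)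
  have hB₂ : 0 < B₂ :=
    mul_pos (Real.rpow_pos_of_pos (by norm_num) _)
      (Real.rpow_pos_of_pos (mul_pos hβ₀ hβ₀) _)
  have hMv : ∀ x : ℝ, 0 ≤ x → (β₀ * (x + β₀)) ^ θ ≤ B₁ * x ^ θ + B₂ := by
    intro x hx
    have e1 : β₀ * (x + β₀) = β₀ * x + β₀ * β₀ := by ring
    rw [e1]
    calc (β₀ * x + β₀ * β₀) ^ θ ≤ 2 ^ θ * ((β₀ * x) ^ θ + (β₀ * β₀) ^ θ) :=
        rpow_add_le_aux _ _ _ (mul_nonneg hβ₀.le hx) (mul_nonneg hβ₀.le hβ₀.le) hθ.le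
      _ = B₁ * x ^ θ + B₂ := by
        rw [Real.mul_rpow hβ₀.le hx, hB₁def, hB₂def]; ring
  -- the minimum of H₀
  obtain ⟨p₀, hp₀eq, hp₀max, -⟩ := hLmax 0
  set m₀ : ℝ := H₀ p₀ with hm₀def
  have hm₀ : ∀ q : En n, m₀ ≤ H₀ q := by
    intro q
    have := hp₀max q
    simp only [inner_zero_left] at this
    linarith
  have hL0 : L₀ 0 = -m₀ := by
    rw [hp₀eq]
    simp [inner_zero_left]
  -- part 2 constant
  set ε : ℝ := (2 * β₀) ^ (-(q₂ - 1)⁻¹) with hεdef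
  have hε : 0 < ε := Real.rpow_pos_of_pos (by linarith) _
  -- part 1 constant
  set G : ℝ := 2 ^ (θ + 1) * β₀ ^ θ with hGdef
  have hG : 0 < G :=
    mul_pos (Real.rpow_pos_of_pos (by norm_num) _) (Real.rpow_pos_of_pos hβ₀ _)
  set ε₁ : ℝ := G ^ (-(q₁ - 1)) with hε₁def
  have hε₁ : 0 < ε₁ := Real.rpow_pos_of_pos hG _
  set C₀ : ℝ := B₂ * ε₁ * (4 * B₂) ^ (q₁ - 1) with hC₀def
  have hC₀ : 0 ≤ C₀ :=
    mul_nonneg (mul_nonneg hB₂.le hε₁.le) (Real.rpow_nonneg (by linarith) _)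
  -- Part 2 main estimate
  have hpart2 : ∀ v : En n, v ≠ 0 → ε / 2 * ‖v‖ ^ m₁ - β₀ ≤ L₀ v := by
    intro v hv
    have hv0 : 0 < ‖v‖ := norm_pos_iff.2 hv
    obtain ⟨P, hPeq, hPmax, -⟩ := hLmax v
    set σ : ℝ := (q₂ - 1)⁻¹ with hσdef
    have hσ : 0 < σ := inv_pos.2 hq₂'
    set r : ℝ := ε * ‖v‖ ^ σ with hrdef
    have hr0 : 0 ≤ r := mul_nonneg hε.le (Real.rpow_nonneg hv0.le _)
    set p : En n := (r / ‖v‖) • v with hpdef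
    have hpn : ‖p‖ = r := by
      rw [hpdef, norm_smul, Real.norm_eq_abs, abs_of_nonneg (div_nonneg hr0 hv0.le),
        div_mul_cancel₀ _ hv0.ne']
    have hip : (inner ℝ v p : ℝ) = r * ‖v‖ := by
      rw [hpdef, real_inner_smul_right, real_inner_self_eq_norm_sq]
      field_simp
    have h1 : (inner ℝ v p : ℝ) - H₀ p ≤ L₀ v := by rw [hPeq]; exact hPmax p
    have h2 : H₀ p ≤ β₀ * (r ^ q₂ + 1) := by
      have := hupper p
      rwa [hpn] at this
    have hrv : r * ‖v‖ = ε * ‖v‖ ^ m₁ := by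
      have e1 : σ + 1 = m₁ := by
        rw [hm₁, hσdef]; field_simp; ring
      rw [hrdef, ← e1, Real.rpow_add hv0, Real.rpow_one]; ring
    have hrq : β₀ * r ^ q₂ = ε / 2 * ‖v‖ ^ m₁ := by
      have e2 : (‖v‖ ^ σ) ^ q₂ = ‖v‖ ^ m₁ := by
        rw [← Real.rpow_mul hv0.le]
        congr 1
        rw [hm₁, hσdef]; field_simp
      have e3 : ε ^ q₂ = (2 * β₀)⁻¹ * ε := by
        have e4 : ε ^ (q₂ - 1) = (2 * β₀)⁻¹ := by
          rw [hεdef, ← Real.rpow_mul (by linarith : (0:ℝ) ≤ 2 * β₀)]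
          have e5 : -(q₂ - 1)⁻¹ * (q₂ - 1) = -1 := by field_simp
          rw [e5, Real.rpow_neg_one]
        calc ε ^ q₂ = ε ^ (q₂ - 1 + 1) := by norm_num
          _ = ε ^ (q₂ - 1) * ε := by rw [Real.rpow_add hε, Real.rpow_one]
          _ = (2 * β₀)⁻¹ * ε := by rw [e4]
      rw [hrdef, Real.mul_rpow hε.le (Real.rpow_nonneg hv0.le _), e2, e3]
      field_simp
    have h2' : β₀ * (r ^ q₂ + 1) = β₀ * r ^ q₂ + β₀ := by ring
    linarith [h1, h2, hip.le, hip.ge]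
  -- Part 1 main estimate
  have hpart1 : ∀ p : En n, p ≠ 0 → ε₁ / 4 * ‖p‖ ^ q₁ - (C₀ - m₀) ≤ H₀ p := by
    intro p hp
    have hp0 : 0 < ‖p‖ := norm_pos_iff.2 hp
    set r : ℝ := ε₁ * ‖p‖ ^ (q₁ - 1) with hrdef
    have hr0 : 0 ≤ r := mul_nonneg hε₁.le (Real.rpow_nonneg hp0.le _)
    set v : En n := (r / ‖p‖) • p with hvdef
    have hvn : ‖v‖ = r := by
      rw [hvdef, norm_smul, Real.norm_eq_abs, abs_of_nonneg (div_nonneg hr0 hp0.le),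
        div_mul_cancel₀ _ hp0.ne']
    have hip : (inner ℝ v p : ℝ) = r * ‖p‖ := by
      rw [hvdef, real_inner_smul_left, real_inner_self_eq_norm_sq]
      field_simp
    obtain ⟨P, hPeq, hPmax, hPn⟩ := hLmax v
    have h1 : r * ‖p‖ - H₀ p ≤ L₀ v := by
      rw [hPeq, ← hip]; exact hPmax p
    have h2 : L₀ v ≤ r * (β₀ * (r + β₀)) ^ θ - m₀ := by
      rw [hPeq]
      have hi : (inner ℝ v P : ℝ) ≤ ‖v‖ * ‖P‖ := real_inner_le_norm v P
      have hPn' : ‖v‖ * ‖P‖ ≤ r * (β₀ * (r + β₀)) ^ θ := by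
        rw [hvn]
        exact mul_le_mul_of_nonneg_left (by rwa [hvn] at hPn) hr0
      have := hm₀ P
      linarith
    have h3 : (β₀ * (r + β₀)) ^ θ ≤ B₁ * r ^ θ + B₂ := hMv r hr0
    have h4 : B₁ * r ^ θ = 1 / 2 * ‖p‖ := by
      have e1 : (‖p‖ ^ (q₁ - 1)) ^ θ = ‖p‖ := by
        rw [← Real.rpow_mul hp0.le, mul_inv_cancel₀ hq₁'.ne', Real.rpow_one]
      have e2 : ε₁ ^ θ = G⁻¹ := by
        rw [hε₁def, ← Real.rpow_mul hG.le]
        have e2' : -(q₁ - 1) * θ = -1 := by rw [hθdef]; field_simp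
        rw [e2', Real.rpow_neg_one]
      have e3 : (2:ℝ) ^ (θ + 1) = 2 ^ θ * 2 := by
        rw [Real.rpow_add (by norm_num : (0:ℝ) < 2), Real.rpow_one]
      have h2θ : (0:ℝ) < 2 ^ θ := Real.rpow_pos_of_pos (by norm_num) _
      have hβθ : (0:ℝ) < β₀ ^ θ := Real.rpow_pos_of_pos hβ₀ _
      rw [hrdef, Real.mul_rpow hε₁.le (Real.rpow_nonneg hp0.le _), e1, e2,
        hB₁def, hGdef, e3]
      field_simp
    have h6 : r * ‖p‖ = ε₁ * ‖p‖ ^ q₁ := by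
      have e7 : ‖p‖ ^ (q₁ - 1) * ‖p‖ = ‖p‖ ^ q₁ := by
        calc ‖p‖ ^ (q₁ - 1) * ‖p‖ = ‖p‖ ^ (q₁ - 1) * ‖p‖ ^ (1:ℝ) := by
              rw [Real.rpow_one]
          _ = ‖p‖ ^ (q₁ - 1 + 1) := (Real.rpow_add hp0 _ _).symm
          _ = ‖p‖ ^ q₁ := by norm_num
      rw [hrdef, mul_assoc, e7]
    have h7 : r * B₂ ≤ ε₁ / 4 * ‖p‖ ^ q₁ + C₀ := by
      have hy := rpow_young_aux ‖p‖ (4 * B₂)⁻¹ (q₁ - 1) hp0.le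
        (inv_pos.2 (by linarith)) hq₁'
      rw [inv_inv] at hy
      have e5 : q₁ - 1 + 1 = q₁ := by ring
      rw [e5] at hy
      have h8 := mul_le_mul_of_nonneg_left hy (mul_nonneg hB₂.le hε₁.le)
      have e6 : B₂ * ε₁ * ((4 * B₂)⁻¹ * ‖p‖ ^ q₁ + (4 * B₂) ^ (q₁ - 1)) =
          ε₁ / 4 * ‖p‖ ^ q₁ + C₀ := by
        rw [hC₀def]
        field_simp
      rw [e6] at h8
      calc r * B₂ = B₂ * ε₁ * ‖p‖ ^ (q₁ - 1) := by rw [hrdef]; ring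
        _ ≤ ε₁ / 4 * ‖p‖ ^ q₁ + C₀ := h8
    have hrθ : r * (B₁ * r ^ θ + B₂) = 1 / 2 * (r * ‖p‖) + r * B₂ := by
      rw [h4]; ring
    have hfin : r * ‖p‖ - H₀ p ≤ 1 / 2 * (r * ‖p‖) + r * B₂ - m₀ := by
      have h8 : r * (β₀ * (r + β₀)) ^ θ ≤ r * (B₁ * r ^ θ + B₂) :=
        mul_le_mul_of_nonneg_left h3 hr0
      linarith
    rw [h6] at hfin
    linarith
  -- assemble β₁
  set β₁ : ℝ := 1 + (max ((ε₁ / 4)⁻¹) 0 + max ((ε / 2)⁻¹) 0 + max (C₀ - m₀) 0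
    + max β₀ 0 + max m₀ 0 + max B₁ 0 + max (2 * B₂) 0) with hβ₁def
  have hmx : ∀ x : ℝ, 0 ≤ max x 0 := fun x => le_max_right _ _
  have hβ₁pos : 0 < β₁ := by
    have := hmx ((ε₁ / 4)⁻¹); have := hmx ((ε / 2)⁻¹); have := hmx (C₀ - m₀)
    have := hmx β₀; have := hmx m₀; have := hmx B₁; have := hmx (2 * B₂)
    rw [hβ₁def]; linarith
  have hβ₁ge : ∀ x : ℝ,
      (x = (ε₁ / 4)⁻¹ ∨ x = (ε / 2)⁻¹ ∨ x = C₀ - m₀ ∨ x = β₀ ∨ x = m₀ ∨ x = B₁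
        ∨ x = 2 * B₂) → x ≤ β₁ := by
    intro x hx
    have h1 := le_max_left ((ε₁ / 4)⁻¹) (0:ℝ)
    have h2 := le_max_left ((ε / 2)⁻¹) (0:ℝ)
    have h3 := le_max_left (C₀ - m₀) (0:ℝ)
    have h4 := le_max_left β₀ (0:ℝ)
    have h5 := le_max_left m₀ (0:ℝ)
    have h6 := le_max_left B₁ (0:ℝ)
    have h7 := le_max_left (2 * B₂) (0:ℝ)
    have := hmx ((ε₁ / 4)⁻¹); have := hmx ((ε / 2)⁻¹); have := hmx (C₀ - m₀)
    have := hmx β₀; have := hmx m₀; have := hmx B₁; have := hmx (2 * B₂)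
    rcases hx with rfl | rfl | rfl | rfl | rfl | rfl | rfl <;> (rw [hβ₁def]; linarith)
  have hinv1 : β₁⁻¹ ≤ ε₁ / 4 := by
    have h := hβ₁ge ((ε₁ / 4)⁻¹) (Or.inl rfl)
    have h0 : (0:ℝ) < (ε₁ / 4)⁻¹ := inv_pos.2 (by linarith)
    calc β₁⁻¹ ≤ ((ε₁ / 4)⁻¹)⁻¹ := inv_anti₀ h0 h
      _ = ε₁ / 4 := inv_inv _
  have hinv2 : β₁⁻¹ ≤ ε / 2 := by
    have h := hβ₁ge ((ε / 2)⁻¹) (Or.inr (Or.inl rfl))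
    have h0 : (0:ℝ) < (ε / 2)⁻¹ := inv_pos.2 (by linarith)
    calc β₁⁻¹ ≤ ((ε / 2)⁻¹)⁻¹ := inv_anti₀ h0 h
      _ = ε / 2 := inv_inv _
  refine ⟨β₁, hβ₁pos, ?_, ?_, ?_⟩
  · -- part 1
    intro p
    by_cases hp : p = 0
    · subst hp
      have e0 : ‖(0:En n)‖ ^ q₁ = 0 := by
        rw [norm_zero, Real.zero_rpow (by positivity : q₁ ≠ 0)]
      rw [e0]
      have h1 := hm₀ 0
      have h2 : C₀ - m₀ ≤ β₁ := hβ₁ge _ (Or.inr (Or.inr (Or.inl rfl)))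
      simp only [mul_zero, zero_sub]
      linarith
    · have h1 := hpart1 p hp
      have h2 : β₁⁻¹ * ‖p‖ ^ q₁ ≤ ε₁ / 4 * ‖p‖ ^ q₁ :=
        mul_le_mul_of_nonneg_right hinv1 (Real.rpow_nonneg (norm_nonneg p) _)
      have h3 : C₀ - m₀ ≤ β₁ := hβ₁ge _ (Or.inr (Or.inr (Or.inl rfl)))
      exact le_trans (sub_le_sub h2 h3) h1
  · -- part 2
    intro v
    by_cases hv : v = 0
    · subst hv
      have e0 : ‖(0:En n)‖ ^ m₁ = 0 := by
        rw [norm_zero, Real.zero_rpow]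
        rw [hm₁]
        positivity
      rw [e0, hL0]
      have h2 : m₀ ≤ β₁ := hβ₁ge _ (Or.inr (Or.inr (Or.inr (Or.inr (Or.inl rfl)))))
      simp only [mul_zero, zero_sub]
      linarith
    · have h1 := hpart2 v hv
      have h2 : β₁⁻¹ * ‖v‖ ^ m₁ ≤ ε / 2 * ‖v‖ ^ m₁ :=
        mul_le_mul_of_nonneg_right hinv2 (Real.rpow_nonneg (norm_nonneg v) _)
      have h3 : β₀ ≤ β₁ := hβ₁ge _ (Or.inr (Or.inr (Or.inr (Or.inl rfl))))
      exact le_trans (sub_le_sub h2 h3) h1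
  · -- part 3
    intro v₁ v₂
    obtain ⟨P₁, hP₁eq, hP₁max, hP₁n⟩ := hLmax v₁
    obtain ⟨P₂, hP₂eq, hP₂max, hP₂n⟩ := hLmax v₂
    have d₁ : L₀ v₁ - L₀ v₂ ≤ ‖v₁ - v₂‖ * ‖P₁‖ := by
      have h1 : (inner ℝ v₂ P₁ : ℝ) - H₀ P₁ ≤ L₀ v₂ := by rw [hP₂eq]; exact hP₂max P₁
      have h2 : L₀ v₁ - L₀ v₂ ≤ (inner ℝ v₁ P₁ : ℝ) - (inner ℝ v₂ P₁ : ℝ) := by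
        rw [hP₁eq]; linarith
      have h3 : (inner ℝ (v₁ - v₂) P₁ : ℝ) = (inner ℝ v₁ P₁ : ℝ) - (inner ℝ v₂ P₁ : ℝ) :=
        inner_sub_left v₁ v₂ P₁
      have h4 : (inner ℝ (v₁ - v₂) P₁ : ℝ) ≤ ‖v₁ - v₂‖ * ‖P₁‖ := real_inner_le_norm _ _
      linarith
    have d₂ : L₀ v₂ - L₀ v₁ ≤ ‖v₁ - v₂‖ * ‖P₂‖ := by
      have h1 : (inner ℝ v₁ P₂ : ℝ) - H₀ P₂ ≤ L₀ v₁ := by rw [hP₁eq]; exact hP₁max P₂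
      have h2 : L₀ v₂ - L₀ v₁ ≤ (inner ℝ v₂ P₂ : ℝ) - (inner ℝ v₁ P₂ : ℝ) := by
        rw [hP₂eq]; linarith
      have h3 : (inner ℝ (v₂ - v₁) P₂ : ℝ) = (inner ℝ v₂ P₂ : ℝ) - (inner ℝ v₁ P₂ : ℝ) :=
        inner_sub_left v₂ v₁ P₂
      have h4 : (inner ℝ (v₂ - v₁) P₂ : ℝ) ≤ ‖v₂ - v₁‖ * ‖P₂‖ := real_inner_le_norm _ _
      rw [norm_sub_rev v₂ v₁] at h4
      linarith
    have hb₁ : ‖P₁‖ ≤ B₁ * ‖v₁‖ ^ θ + B₂ :=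
      le_trans hP₁n (hMv ‖v₁‖ (norm_nonneg _))
    have hb₂ : ‖P₂‖ ≤ B₁ * ‖v₂‖ ^ θ + B₂ :=
      le_trans hP₂n (hMv ‖v₂‖ (norm_nonneg _))
    have habs : |L₀ v₁ - L₀ v₂| ≤ ‖v₁ - v₂‖ * (‖P₁‖ + ‖P₂‖) := by
      rw [abs_le]
      constructor
      · have := mul_le_mul_of_nonneg_left (le_add_of_nonneg_left (norm_nonneg P₁) :
          ‖P₂‖ ≤ ‖P₁‖ + ‖P₂‖) (norm_nonneg (v₁ - v₂))
        linarith
      · have := mul_le_mul_of_nonneg_left (le_add_of_nonneg_right (norm_nonneg P₂) :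
          ‖P₁‖ ≤ ‖P₁‖ + ‖P₂‖) (norm_nonneg (v₁ - v₂))
        linarith
    have hcoef : ‖P₁‖ + ‖P₂‖ ≤ β₁ * (‖v₁‖ ^ (m₂ - 1) + ‖v₂‖ ^ (m₂ - 1) + 1) := by
      rw [hθm]
      have hx : (0:ℝ) ≤ ‖v₁‖ ^ θ := Real.rpow_nonneg (norm_nonneg _) _
      have hy : (0:ℝ) ≤ ‖v₂‖ ^ θ := Real.rpow_nonneg (norm_nonneg _) _
      have hc1 : B₁ ≤ β₁ :=
        hβ₁ge _ (Or.inr (Or.inr (Or.inr (Or.inr (Or.inr (Or.inl rfl))))))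
      have hc2 : 2 * B₂ ≤ β₁ :=
        hβ₁ge _ (Or.inr (Or.inr (Or.inr (Or.inr (Or.inr (Or.inr rfl))))))
      nlinarith [hβ₁pos]
    calc |L₀ v₁ - L₀ v₂| ≤ ‖v₁ - v₂‖ * (‖P₁‖ + ‖P₂‖) := habs
      _ ≤ ‖v₁ - v₂‖ * (β₁ * (‖v₁‖ ^ (m₂ - 1) + ‖v₂‖ ^ (m₂ - 1) + 1)) :=
        mul_le_mul_of_nonneg_left hcoef (norm_nonneg _)
      _ = β₁ * (‖v₁‖ ^ (m₂ - 1) + ‖v₂‖ ^ (m₂ - 1) + 1) * ‖v₁ - v₂‖ := by ring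
end
end

section
/- Let F:ℝ→ℝ be Lipschitz continuous and ℤ-periodic. For ε>0 and a∈ℝ, let y^ε(·;a):[0,∞)→ℝ be the unique solution of the ODE ẏ(t) = F(y(t)/ε) with y(0)=a. Then there exist ξ∈ℝ and C>0 depending only on F such that for all a∈ℝ, all t>0 and all ε∈(0,1): |y^ε(t;a) − (a + ξt)| ≤ Cε. -/
open Set

/-- Integer-shift invariance from 1-periodicity. -/
lemma per_int_shift {F : ℝ → ℝ} (hFper : ∀ y : ℝ, F (y + 1) = F y) (u : ℝ) (n : ℤ) :
    F (u + n) = F u := by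
  have h : Function.Periodic F 1 := hFper
  have := h.sub_int_mul_eq (x := u + n) n
  simpa using this.symm

/-- The positive case: if `F > 0` everywhere, the homogenization estimate holds. -/
lemma pos_case (F : ℝ → ℝ) (hFcont : Continuous F)
    (hFper : ∀ y : ℝ, F (y + 1) = F y)
    (hFpos : ∀ u : ℝ, 0 < F u)
    (y : ℝ → ℝ → ℝ → ℝ)
    (hy0 : ∀ ε : ℝ, 0 < ε → ∀ a : ℝ, y ε a 0 = a)
    (hyde : ∀ ε : ℝ, 0 < ε → ∀ a t : ℝ, 0 ≤ t →
      HasDerivAt (y ε a) (F (y ε a t / ε)) t) :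
    ∃ ξ C : ℝ, 0 < C ∧ ∀ a : ℝ, ∀ t : ℝ, 0 < t → ∀ ε ∈ Set.Ioo (0:ℝ) 1,
      |y ε a t - (a + ξ * t)| ≤ C * ε := by
  have hFne : ∀ u : ℝ, F u ≠ 0 := fun u => (hFpos u).ne'
  have hFinv : Continuous (fun s : ℝ => (F s)⁻¹) := hFcont.inv₀ hFne
  set G : ℝ → ℝ := fun u => ∫ s in (0:ℝ)..u, (F s)⁻¹ with hGdef
  have hGint : ∀ a b : ℝ, IntervalIntegrable (fun s : ℝ => (F s)⁻¹) MeasureTheory.volume a b :=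
    fun a b => hFinv.intervalIntegrable a b
  have hG' : ∀ u : ℝ, HasDerivAt G ((F u)⁻¹) u := by
    intro u
    exact intervalIntegral.integral_hasDerivAt_right (hGint 0 u)
      (hFinv.stronglyMeasurableAtFilter _ _) hFinv.continuousAt
  set T : ℝ := G 1 with hTdef
  have hT : 0 < T := by
    apply intervalIntegral.intervalIntegral_pos_of_pos (hGint 0 1) _ one_pos
    intro x; exact inv_pos.2 (hFpos x)
  have hinvper : Function.Periodic (fun s : ℝ => (F s)⁻¹) 1 := by
    intro x; simp [hFper x]
  have hGadd : ∀ u : ℝ, G (u + 1) = G u + T := by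
    intro u
    have h1 : G u + ∫ s in u..(u+1), (F s)⁻¹ = G (u + 1) :=
      intervalIntegral.integral_add_adjacent_intervals (hGint 0 u) (hGint u (u+1))
    have h2 : (∫ s in u..(u+1), (F s)⁻¹) = ∫ s in (0:ℝ)..(0+1), (F s)⁻¹ :=
      hinvper.intervalIntegral_add_eq u 0
    rw [← h1, h2]
    simp [hTdef, hGdef]
  set H : ℝ → ℝ := fun u => G u - T * u with hHdef
  have hHper : Function.Periodic H 1 := by
    intro u; simp only [hHdef, hGadd u]; ring
  have hHcont : Continuous H := by
    have : Continuous G := by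
      apply continuous_iff_continuousAt.2; intro u; exact (hG' u).continuousAt
    exact this.sub (continuous_const.mul continuous_id)
  obtain ⟨M, hM⟩ : ∃ M : ℝ, ∀ u : ℝ, |H u| ≤ M := by
    obtain ⟨M, hM⟩ := (isCompact_Icc (a := (0:ℝ)) (b := 1)).exists_bound_of_continuousOn
      hHcont.continuousOn
    refine ⟨M, fun u => ?_⟩
    have hfr : H (Int.fract u) = H u := by
      have h := hHper.sub_int_mul_eq (x := u) ⌊u⌋
      rw [mul_one, Int.self_sub_floor] at h
      exact h
    rw [← hfr]
    have : Int.fract u ∈ Icc (0:ℝ) 1 :=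
      ⟨Int.fract_nonneg u, (Int.fract_lt_one u).le⟩
    simpa using hM _ this
  have hM0 : 0 ≤ M := le_trans (abs_nonneg _) (hM 0)
  refine ⟨T⁻¹, (2*M + 1)/T, by positivity, ?_⟩
  intro a t ht ε hε
  obtain ⟨hε0, hε1⟩ := hε
  -- the key identity : G (y ε a t / ε) = G (a / ε) + t / ε
  set φ : ℝ → ℝ := fun s => G (y ε a s / ε) - s / ε with hφdef
  have hφ' : ∀ s : ℝ, 0 ≤ s → HasDerivAt φ 0 s := by
    intro s hs
    have h1 := hyde ε hε0 a s hs
    have h2 : HasDerivAt (fun s => y ε a s / ε) (F (y ε a s / ε) / ε) s := h1.div_const ε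
    have h3 := (hG' (y ε a s / ε)).comp s h2
    have h4 : HasDerivAt (fun s : ℝ => s / ε) (1 / ε) s := (hasDerivAt_id s).div_const ε
    have h5 := h3.sub h4
    have h6 : (F (y ε a s / ε))⁻¹ * (F (y ε a s / ε) / ε) - 1 / ε = 0 := by
      rw [← mul_div_assoc, inv_mul_cancel₀ (hFne _), sub_self]
    rw [h6] at h5
    exact h5
  have key : G (y ε a t / ε) = G (a / ε) + t / ε := by
    have hconst : ∀ s ∈ Icc 0 t, φ s = φ 0 := by
      apply constant_of_has_deriv_right_zero
      · exact continuousOn_of_forall_continuousAt fun s hs => (hφ' s hs.1).continuousAt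
      · exact fun s hs => (hφ' s hs.1).hasDerivWithinAt
    have := hconst t ⟨ht.le, le_rfl⟩
    simp only [hφdef, hy0 ε hε0 a] at this
    have h0 : (0:ℝ)/ε = 0 := by simp
    rw [h0, sub_zero] at this
    linarith
  -- unpack using H
  have hGy : G (y ε a t / ε) = H (y ε a t / ε) + T * (y ε a t / ε) := by
    simp [hHdef]
  have hGa : G (a / ε) = H (a / ε) + T * (a / ε) := by simp [hHdef]
  rw [hGy, hGa] at key
  have hεne : ε ≠ 0 := hε0.ne'
  have hTne : T ≠ 0 := hT.ne'
  have heq : y ε a t - (a + T⁻¹ * t) = ε / T * (H (a/ε) - H (y ε a t / ε)) := by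
    field_simp at key ⊢
    nlinarith [key]
  rw [heq, abs_mul]
  have h1 : |ε / T| = ε / T := abs_of_pos (by positivity)
  have h2 : |H (a/ε) - H (y ε a t / ε)| ≤ 2 * M := by
    have := hM (a/ε); have := hM (y ε a t / ε)
    have := abs_sub (H (a/ε)) (H (y ε a t / ε))
    calc |H (a/ε) - H (y ε a t / ε)| ≤ |H (a/ε)| + |H (y ε a t / ε)| := abs_sub _ _
      _ ≤ 2 * M := by linarith [hM (a/ε), hM (y ε a t / ε)]
  calc |ε / T| * |H (a/ε) - H (y ε a t / ε)| ≤ (ε / T) * (2 * M) := by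
        rw [h1]; exact mul_le_mul_of_nonneg_left h2 (by positivity)
    _ ≤ (2*M + 1)/T * ε := by
        rw [div_mul_eq_mul_div, div_mul_eq_mul_div]
        exact (div_le_div_iff_of_pos_right hT).mpr (by nlinarith)
  
/-- Trapping: a solution starting below a stationary point stays below. -/
lemma no_cross_up (F : ℝ → ℝ) (KF : NNReal) (hFlip : LipschitzWith KF F)
    (ε : ℝ) (hε0 : 0 < ε) (a b : ℝ) (hb : F (b / ε) = 0) (hab : a ≤ b)
    (y : ℝ → ℝ) (hy0 : y 0 = a)
    (hyde : ∀ t : ℝ, 0 ≤ t → HasDerivAt y (F (y t / ε)) t) :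
    ∀ t : ℝ, 0 ≤ t → y t ≤ b := by
  have hdiv : LipschitzWith (⟨ε⁻¹, (inv_pos.2 hε0).le⟩ : NNReal) (fun u : ℝ => u / ε) := by
    apply LipschitzWith.of_dist_le_mul
    intro x₁ x₂
    rw [Real.dist_eq, Real.dist_eq, div_sub_div_same, abs_div, abs_of_pos hε0]
    show |x₁ - x₂| / ε ≤ ε⁻¹ * |x₁ - x₂|
    rw [div_eq_inv_mul]
  have hv : ∀ s : ℝ, LipschitzWith (KF * ⟨ε⁻¹, (inv_pos.2 hε0).le⟩)
      (fun u : ℝ => F (u / ε)) := fun _ => hFlip.comp hdiv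
  intro t ht
  by_contra hcon
  push_neg at hcon
  have hcont : ContinuousOn y (Icc 0 t) :=
    continuousOn_of_forall_continuousAt fun s hs => (hyde s hs.1).continuousAt
  have hbmem : b ∈ Icc (y 0) (y t) := by rw [hy0]; exact ⟨hab, hcon.le⟩
  obtain ⟨t₂, ht₂mem, ht₂⟩ := intermediate_value_Icc ht hcont hbmem
  have hgd : ∀ s : ℝ, HasDerivAt (fun _ : ℝ => b) (F (b / ε)) s := by
    intro s; rw [hb]; exact hasDerivAt_const s b
  have hEq : a = b := by
    rcases eq_or_lt_of_le ht₂mem.1 with h | h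
    · rw [← h] at ht₂; rw [← hy0]; exact ht₂
    · have := ODE_solution_unique_of_mem_Icc_left (v := fun _ u => F (u / ε))
        (s := fun _ => (univ : Set ℝ)) (f := y) (g := fun _ => b)
        (fun s _ => (hv s).lipschitzOnWith)
        (hcont.mono (Icc_subset_Icc_right ht₂mem.2))
        (fun s hs => (hyde s hs.1.le).hasDerivWithinAt)
        (fun _ _ => trivial) continuousOn_const
        (fun s _ => (hgd s).hasDerivWithinAt)
        (fun _ _ => trivial) ht₂ ⟨le_rfl, h.le⟩
      rw [← hy0, this]
  have := ODE_solution_unique (v := fun _ u => F (u / ε)) (f := y) (g := fun _ => b)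
    hv hcont (fun s hs => (hyde s hs.1).hasDerivWithinAt) continuousOn_const
    (fun s _ => (hgd s).hasDerivWithinAt) (by rw [hy0, hEq]) ⟨ht, le_rfl⟩
  rw [this] at hcon
  exact lt_irrefl b hcon

lemma no_cross_down (F : ℝ → ℝ) (KF : NNReal) (hFlip : LipschitzWith KF F)
    (ε : ℝ) (hε0 : 0 < ε) (a b : ℝ) (hb : F (b / ε) = 0) (hab : b ≤ a)
    (y : ℝ → ℝ) (hy0 : y 0 = a)
    (hyde : ∀ t : ℝ, 0 ≤ t → HasDerivAt y (F (y t / ε)) t) :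
    ∀ t : ℝ, 0 ≤ t → b ≤ y t := by
  have hdiv : LipschitzWith (⟨ε⁻¹, (inv_pos.2 hε0).le⟩ : NNReal) (fun u : ℝ => u / ε) := by
    apply LipschitzWith.of_dist_le_mul
    intro x₁ x₂
    rw [Real.dist_eq, Real.dist_eq, div_sub_div_same, abs_div, abs_of_pos hε0]
    show |x₁ - x₂| / ε ≤ ε⁻¹ * |x₁ - x₂|
    rw [div_eq_inv_mul]
  have hv : ∀ s : ℝ, LipschitzWith (KF * ⟨ε⁻¹, (inv_pos.2 hε0).le⟩)
      (fun u : ℝ => F (u / ε)) := fun _ => hFlip.comp hdiv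
  intro t ht
  by_contra hcon
  push_neg at hcon
  have hcont : ContinuousOn y (Icc 0 t) :=
    continuousOn_of_forall_continuousAt fun s hs => (hyde s hs.1).continuousAt
  have hbmem : b ∈ Icc (y t) (y 0) := by rw [hy0]; exact ⟨hcon.le, hab⟩
  obtain ⟨t₂, ht₂mem, ht₂⟩ := intermediate_value_Icc' ht hcont hbmem
  have hgd : ∀ s : ℝ, HasDerivAt (fun _ : ℝ => b) (F (b / ε)) s := by
    intro s; rw [hb]; exact hasDerivAt_const s b
  have hEq : a = b := by
    rcases eq_or_lt_of_le ht₂mem.1 with h | h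
    · rw [← h] at ht₂; rw [← hy0]; exact ht₂
    · have := ODE_solution_unique_of_mem_Icc_left (v := fun _ u => F (u / ε))
        (s := fun _ => (univ : Set ℝ)) (f := y) (g := fun _ => b)
        (fun s _ => (hv s).lipschitzOnWith)
        (hcont.mono (Icc_subset_Icc_right ht₂mem.2))
        (fun s hs => (hyde s hs.1.le).hasDerivWithinAt)
        (fun _ _ => trivial) continuousOn_const
        (fun s _ => (hgd s).hasDerivWithinAt)
        (fun _ _ => trivial) ht₂ ⟨le_rfl, h.le⟩
      rw [← hy0, this]
  have := ODE_solution_unique (v := fun _ u => F (u / ε)) (f := y) (g := fun _ => b)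
    hv hcont (fun s hs => (hyde s hs.1).hasDerivWithinAt) continuousOn_const
    (fun s _ => (hgd s).hasDerivWithinAt) (by rw [hy0, hEq]) ⟨ht, le_rfl⟩
  rw [this] at hcon
  exact lt_irrefl b hcon

/-- Homogenization of the 1D ODE `ẏ = F(y/ε)` with `F` Lipschitz and `ℤ`-periodic:
the solutions converge to an affine function `a + ξ t` with rate `Cε`. -/
theorem ode_homogenization_rate
    (F : ℝ → ℝ) (KF : NNReal) (hFlip : LipschitzWith KF F)
    (hFper : ∀ y : ℝ, F (y + 1) = F y)
    (y : ℝ → ℝ → ℝ → ℝ)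
    (hy0 : ∀ ε : ℝ, 0 < ε → ∀ a : ℝ, y ε a 0 = a)
    (hyde : ∀ ε : ℝ, 0 < ε → ∀ a t : ℝ, 0 ≤ t →
      HasDerivAt (y ε a) (F (y ε a t / ε)) t) :
    ∃ ξ C : ℝ, 0 < C ∧ ∀ a : ℝ, ∀ t : ℝ, 0 < t → ∀ ε ∈ Set.Ioo (0:ℝ) 1,
      |y ε a t - (a + ξ * t)| ≤ C * ε := by
  by_cases hzero : ∃ z : ℝ, F z = 0
  · -- stationary case: ξ = 0, C = 2
    obtain ⟨z, hz⟩ := hzero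
    refine ⟨0, 2, two_pos, ?_⟩
    intro a t ht ε hε
    obtain ⟨hε0, hε1⟩ := hε
    set k : ℤ := ⌈a / ε - z⌉ with hk
    set b : ℝ := ε * (z + k) with hbdef
    set c : ℝ := ε * (z + k - 1) with hcdef
    have hεne : ε ≠ 0 := hε0.ne'
    have hFb : F (b / ε) = 0 := by
      have : b / ε = z + k := by field_simp [hbdef]; try ring
      rw [this, per_int_shift hFper z k, hz]
    have hFc : F (c / ε) = 0 := by
      have : c / ε = z + (k - 1 : ℤ) := by push_cast; field_simp [hcdef]; try ring
      rw [this, per_int_shift hFper z (k-1), hz]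
    have hab : a ≤ b := by
      have h1 : a / ε - z ≤ (k : ℝ) := Int.le_ceil _
      have h2 : a / ε ≤ z + k := by linarith
      calc a = ε * (a / ε) := by field_simp
        _ ≤ ε * (z + k) := by apply mul_le_mul_of_nonneg_left h2 hε0.le
    have hca : c ≤ a := by
      have h1 : (k : ℝ) - 1 < a / ε - z := by
        have := Int.ceil_lt_add_one (a / ε - z); push_cast at this ⊢; linarith
      have h2 : z + k - 1 ≤ a / ε := by linarith
      calc c = ε * (z + k - 1) := rfl
        _ ≤ ε * (a / ε) := mul_le_mul_of_nonneg_left h2 hε0.le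
        _ = a := by field_simp
    have hup := no_cross_up F KF hFlip ε hε0 a b hFb hab (y ε a) (hy0 ε hε0 a)
      (fun t ht => hyde ε hε0 a t ht) t ht.le
    have hdn := no_cross_down F KF hFlip ε hε0 a c hFc hca (y ε a) (hy0 ε hε0 a)
      (fun t ht => hyde ε hε0 a t ht) t ht.le
    have hbc : b - c = ε := by simp only [hbdef, hcdef]; ring
    rw [zero_mul, add_zero, abs_sub_le_iff]
    constructor <;> nlinarith
  · -- no zeros: F has constant sign
    push_neg at hzero
    have hFcont : Continuous F := hFlip.continuous
    rcases lt_or_gt_of_ne (hzero 0) with h0 | h0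
    · -- F 0 < 0, hence F < 0 everywhere; reduce to positive case via reflection
      have hFneg : ∀ u : ℝ, F u < 0 := by
        intro u
        by_contra hcon
        push_neg at hcon
        have hlt : 0 < F u := lt_of_le_of_ne hcon (fun h => hzero u h.symm)
        have : (0:ℝ) ∈ Icc (F 0) (F u) := ⟨h0.le, hlt.le⟩
        obtain ⟨z, hz⟩ := intermediate_value_univ 0 u hFcont this
        exact hzero z hz
      set F' : ℝ → ℝ := fun u => -F (-u) with hF'def
      set y' : ℝ → ℝ → ℝ → ℝ := fun ε a t => -(y ε (-a) t) with hy'def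
      have hF'cont : Continuous F' := (hFcont.comp continuous_neg).neg
      have hF'per : ∀ u : ℝ, F' (u + 1) = F' u := by
        intro u
        have h := hFper (-(u+1))
        rw [show -(u+1) + 1 = -u by ring] at h
        simp only [hF'def]
        rw [h]
      have hF'pos : ∀ u : ℝ, 0 < F' u := fun u => by
        simp only [hF'def, neg_pos]; exact hFneg (-u)
      have hy'0 : ∀ ε : ℝ, 0 < ε → ∀ a : ℝ, y' ε a 0 = a := by
        intro ε hε a; simp [hy'def, hy0 ε hε (-a)]
      have hy'de : ∀ ε : ℝ, 0 < ε → ∀ a t : ℝ, 0 ≤ t →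
          HasDerivAt (y' ε a) (F' (y' ε a t / ε)) t := by
        intro ε hε a t htt
        have := (hyde ε hε (-a) t htt).neg
        simp only [hy'def, hF'def, neg_div, neg_neg]
        exact this
      obtain ⟨ξ', C', hC', hbound⟩ := pos_case F' hF'cont hF'per hF'pos y' hy'0 hy'de
      refine ⟨-ξ', C', hC', ?_⟩
      intro a t ht ε hε
      have := hbound (-a) t ht ε hε
      simp only [hy'def, neg_neg] at this
      have habs : |-(y ε a t) - (-a + ξ' * t)| = |y ε a t - (a + -ξ' * t)| := by
        rw [show -(y ε a t) - (-a + ξ' * t) = -(y ε a t - (a + -ξ' * t)) by ring, abs_neg]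
      rwa [habs] at this
    · -- F 0 > 0, hence F > 0 everywhere
      have hFpos : ∀ u : ℝ, 0 < F u := by
        intro u
        by_contra hcon
        push_neg at hcon
        have hlt : F u < 0 := lt_of_le_of_ne hcon (hzero u)
        have : (0:ℝ) ∈ Icc (F u) (F 0) := ⟨hlt.le, h0.le⟩
        obtain ⟨z, hz⟩ := intermediate_value_univ u 0 hFcont this
        exact hzero z hz
      exact pos_case F hFcont hFper hFpos y hy0 hyde
end

section
/- Let N>0 and let φ:(0,∞)→ℝ satisfy: (i) φ(a+b) ≤ φ(a) + φ(b) for all a,b>0 with max{a,b} ≥ N; (ii) for every l₀>0 there is M>0 with φ(s) ≤ M for all s∈(0,l₀]; and (iii) inf_{k>N} φ(k)/k > −∞. Then the limit lim_{k→∞} φ(k)/k exists and equals inf_{k>N} φ(k)/k. -/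
open Set Filter

private lemma fekete_iter (N t : ℝ) (φ : ℝ → ℝ)
    (hsub : ∀ a b : ℝ, 0 < a → 0 < b → N ≤ max a b → φ (a + b) ≤ φ a + φ b)
    (htN : N ≤ t) (ht0 : 0 < t) :
    ∀ n : ℕ, ∀ x : ℝ, 0 < x → φ (x + n * t) ≤ φ x + n * φ t := by
  intro n
  induction n with
  | zero => intro x hx; simp
  | succ n ih =>
    intro x hx
    have hx' : 0 < x + n * t := by positivity
    have h1 : φ ((x + n * t) + t) ≤ φ (x + n * t) + φ t :=
      hsub _ _ hx' ht0 (le_trans htN (le_max_right _ _))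
    have h2 := ih x hx
    have he : x + (n + 1 : ℕ) * t = (x + n * t) + t := by push_cast; ring
    rw [he]
    push_cast
    linarith

/-- A Fekete-type lemma: if `φ` is subadditive whenever one of the two arguments is at
least `N`, bounded above on bounded intervals, and `inf_{k>N} φ(k)/k > -∞`, then
`φ(k)/k` converges to `inf_{k>N} φ(k)/k` as `k → ∞`. -/
theorem fekete_type_lemma
    (N : ℝ) (hN : 0 < N) (φ : ℝ → ℝ)
    (hsub : ∀ a b : ℝ, 0 < a → 0 < b → N ≤ max a b → φ (a + b) ≤ φ a + φ b)
    (hbdd : ∀ l₀ : ℝ, 0 < l₀ → ∃ M : ℝ, ∀ s ∈ Set.Ioc (0:ℝ) l₀, φ s ≤ M)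
    (hbelow : BddBelow {r : ℝ | ∃ k : ℝ, N < k ∧ r = φ k / k}) :
    Filter.Tendsto (fun k : ℝ => φ k / k) Filter.atTop
      (nhds (sInf {r : ℝ | ∃ k : ℝ, N < k ∧ r = φ k / k})) := by
  set S := {r : ℝ | ∃ k : ℝ, N < k ∧ r = φ k / k} with hSdef
  set L := sInf S with hLdef
  have hSne : S.Nonempty := ⟨φ (N + 1) / (N + 1), N + 1, by linarith, rfl⟩
  rw [tendsto_order]
  constructor
  · intro a ha
    filter_upwards [eventually_gt_atTop N] with k hk
    exact lt_of_lt_of_le ha (csInf_le hbelow ⟨k, hk, rfl⟩)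
  · intro a ha
    have hLa : L < (L + a) / 2 := by linarith
    obtain ⟨r, hrS, hr⟩ := exists_lt_of_csInf_lt hSne hLa
    obtain ⟨t, htN, rfl⟩ := hrS
    have ht0 : 0 < t := hN.trans htN
    obtain ⟨M, hM⟩ := hbdd (2 * t) (by linarith)
    set C := M + 2 * |φ t| with hCdef
    have haL : 0 < a - L := by linarith
    filter_upwards [eventually_ge_atTop (2 * t), eventually_gt_atTop (2 * C / (a - L))]
      with k hk2t hkC
    have hk0 : 0 < k := by linarith
    set n : ℕ := ⌊(k - t) / t⌋₊ with hndef
    have hnn : 0 ≤ (k - t) / t := div_nonneg (by linarith) ht0.le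
    have hn1 : (n : ℝ) ≤ (k - t) / t := Nat.floor_le hnn
    have hn2 : (k - t) / t < n + 1 := Nat.lt_floor_add_one _
    have hnt : (n : ℝ) * t ≤ k - t := by
      have h := mul_le_mul_of_nonneg_right hn1 ht0.le
      rwa [div_mul_cancel₀ _ ht0.ne'] at h
    have hnt2 : k - 2 * t < (n : ℝ) * t := by
      have h := (div_lt_iff₀ ht0).mp hn2
      nlinarith
    set x := k - (n : ℝ) * t with hxdef
    have hx1 : t ≤ x := by simp only [hxdef]; linarith
    have hx2 : x < 2 * t := by simp only [hxdef]; linarith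
    have hφx : φ x ≤ M := hM x ⟨by linarith, by linarith⟩
    have key : φ k ≤ φ x + n * φ t := by
      have h := fekete_iter N t φ hsub htN.le ht0 n x (by linarith)
      have he : x + (n : ℝ) * t = k := by simp [hxdef]
      rwa [he] at h
    have hnφ : (n : ℝ) * φ t ≤ k * (φ t / t) + 2 * |φ t| := by
      have hu : φ t / t * t = φ t := div_mul_cancel₀ _ ht0.ne'
      rcases abs_cases (φ t) with ⟨he, hp⟩ | ⟨he, hneg⟩
      · rw [he]
        have hu0 : 0 ≤ φ t / t := div_nonneg hp ht0.le
        nlinarith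
      · rw [he]
        have hu0 : φ t / t < 0 := div_neg_of_neg_of_pos hneg ht0
        nlinarith
    have hφk : φ k ≤ k * (φ t / t) + C := by
      simp only [hCdef]; linarith
    have hCk : C / k < (a - L) / 2 := by
      have h2C : 2 * C < k * (a - L) := by
        have := (div_lt_iff₀ haL).mp hkC
        nlinarith
      rw [div_lt_div_iff₀ hk0 (by norm_num : (0:ℝ) < 2)]
      nlinarith
    have hdiv : φ k / k ≤ φ t / t + C / k := by
      have h1 : φ k / k ≤ (k * (φ t / t) + C) / k := by gcongr
      have h2 : (k * (φ t / t) + C) / k = φ t / t + C / k := by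
        rw [add_div, mul_div_cancel_left₀ _ hk0.ne']
      rw [h2] at h1; exact h1
    calc φ k / k ≤ φ t / t + C / k := hdiv
      _ < (L + a) / 2 + (a - L) / 2 := by linarith
      _ = a := by ring
end
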